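/- arXiv:1808.00515 — 3 statements merged into one kernel-verified Lean document; each statement's English description precedes it below -/
import Mathlib

section
/- Let M be a martingale with continuous paths on [0,T] with E[sup_{t ≤ T} |M_t|] < ∞, let M*_t = max_{r ≤ t} M_r be its running maximum, let P̄ ∈ ℝ, and set P_t = M_t − (M*_t − P̄)⁺. Then for all 0 ≤ t ≤ s ≤ T, almost surely E[P_s | F_t] = P_t − E[(M*_s − max(P̄, M*_t))⁺ | F_t]. -/
/-!
Since `M*_t ≤ M*_s`, the cap term splits as
`(M*_s − P̄)⁺ = (M*_t − P̄)⁺ + (M*_s − max(P̄, M*_t))⁺`.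
By path continuity `M*_t` is a supremum over countably many times, hence `ℱ t`-measurable, so the
first summand passes through `E[· | ℱ t]`, while `E[M_s | ℱ t] = M_t`. The bound
`|M*_u| ≤ sup_{r ≤ T} |M_r|` gives all the integrability needed.
-/

open MeasureTheory

noncomputable section

/-- The running maximum `M*_t(ω) = max_{r ≤ t} M_r(ω)` over `[0,t]`. -/
def runMax {Ω : Type*} (M : ℝ → Ω → ℝ) (t : ℝ) (ω : Ω) : ℝ :=
  sSup ((fun r => M r ω) '' Set.Icc 0 t)

/-- The capped price `P_t = M_t − (M*_t − P̄)⁺`. -/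
def cappedPrice {Ω : Type*} (Pbar : ℝ) (M : ℝ → Ω → ℝ) (t : ℝ) (ω : Ω) : ℝ :=
  M t ω - max (runMax M t ω - Pbar) 0

open Set

lemma max_sub_zero_eq_add_of_le {a b c : ℝ} (hba : b ≤ a) :
    max (a - c) 0 = max (b - c) 0 + max (a - max c b) 0 := by
  rcases le_total b c with h | h
  · simp [h, sub_nonpos.2 h]
  · simp only [max_eq_right h]
    rw [max_eq_left (by linarith), max_eq_left (by linarith), max_eq_left (by linarith)]
    ring

section RunningMax

variable {Ω : Type*} {M : ℝ → Ω → ℝ}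

lemma runMax_eq_iSup_of_dense {u : ℝ} {D : Set (Icc (0 : ℝ) u)} (hD : Dense D) {ω : Ω}
    (hM : ContinuousOn (fun r => M r ω) (Icc 0 u)) :
    runMax M u ω = ⨆ r : D, M r ω := by
  rw [runMax, sSup_image']
  exact (hD.ciSup' (continuousOn_iff_continuous_domRestrict.1 hM)).symm

lemma measurable_runMax {m0 : MeasurableSpace Ω} (ℱ : Filtration ℝ m0) (hadp : Adapted ℱ M)
    {u : ℝ} (hM : ∀ ω, ContinuousOn (fun r => M r ω) (Icc 0 u)) :
    Measurable[ℱ u] (runMax M u) := by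
  obtain ⟨D, hDc, hD⟩ := TopologicalSpace.exists_countable_dense (Icc (0 : ℝ) u)
  have : Countable D := hDc.to_subtype
  rw [show runMax M u = fun ω => ⨆ r : D, M r ω from
    funext fun ω => runMax_eq_iSup_of_dense hD (hM ω)]
  exact Measurable.iSup fun r => (hadp r).mono (ℱ.mono r.1.2.2) le_rfl

lemma runMax_mono {ω : Ω} {t s : ℝ} (hbdd : BddAbove ((fun r => M r ω) '' Icc 0 s))
    (ht : 0 ≤ t) (hts : t ≤ s) : runMax M t ω ≤ runMax M s ω :=
  csSup_le_csSup hbdd ((nonempty_Icc.2 ht).image _) (image_mono (Icc_subset_Icc le_rfl hts))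

lemma abs_runMax_le {ω : Ω} {T u : ℝ} (hM : ContinuousOn (fun r => M r ω) (Icc 0 T))
    (hu : 0 ≤ u) (huT : u ≤ T) :
    |runMax M u ω| ≤ sSup ((fun r => |M r ω|) '' Icc 0 T) := by
  have hle : ∀ r ∈ Icc 0 u, |M r ω| ≤ sSup ((fun r => |M r ω|) '' Icc 0 T) := fun r hr =>
    le_csSup (isCompact_Icc.bddAbove_image hM.abs) ⟨r, Icc_subset_Icc le_rfl huT hr, rfl⟩
  have h0 : (0 : ℝ) ∈ Icc 0 u := ⟨le_rfl, hu⟩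
  refine abs_le.2 ⟨?_, csSup_le ((nonempty_Icc.2 hu).image _) ?_⟩
  · have hM0 : M 0 ω ≤ runMax M u ω :=
      le_csSup (isCompact_Icc.bddAbove_image (hM.mono (Icc_subset_Icc le_rfl huT))) ⟨0, h0, rfl⟩
    linarith [neg_abs_le (M 0 ω), hle 0 h0]
  · rintro _ ⟨r, hr, rfl⟩
    exact (le_abs_self _).trans (hle r hr)

lemma integrable_runMax {m0 : MeasurableSpace Ω} {μ : Measure Ω} {T u : ℝ}
    (hM : ∀ ω, ContinuousOn (fun r => M r ω) (Icc 0 T))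
    (hMint : Integrable (fun ω => sSup ((fun r => |M r ω|) '' Icc 0 T)) μ)
    (hmeas : Measurable (runMax M u)) (hu : 0 ≤ u) (huT : u ≤ T) :
    Integrable (runMax M u) μ :=
  hMint.mono' hmeas.aestronglyMeasurable (ae_of_all _ fun ω => abs_runMax_le (hM ω) hu huT)

end RunningMax

theorem cappedPrice_condexp_general
    {Ω : Type*} {m0 : MeasurableSpace Ω} {μ : Measure Ω} [IsProbabilityMeasure μ]
    (ℱ : MeasureTheory.Filtration ℝ m0) (T Pbar : ℝ)
    (M : ℝ → Ω → ℝ) (hM : Martingale M ℱ μ)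
    (hMcont : ∀ ω, ContinuousOn (fun t => M t ω) (Set.Icc 0 T))
    (hMint : Integrable (fun ω => sSup ((fun t => |M t ω|) '' Set.Icc 0 T)) μ)
    (t s : ℝ) (ht : 0 ≤ t) (hts : t ≤ s) (hsT : s ≤ T) :
    μ[fun ω => cappedPrice Pbar M s ω | ℱ t]
      =ᵐ[μ] fun ω => cappedPrice Pbar M t ω
        - (μ[fun ω' => max (runMax M s ω' - max Pbar (runMax M t ω')) 0 | ℱ t]) ω := by
  have htT : t ≤ T := hts.trans hsT
  have hcont {u : ℝ} (hu : u ≤ T) ω : ContinuousOn (fun r => M r ω) (Icc 0 u) :=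
    (hMcont ω).mono (Icc_subset_Icc le_rfl hu)
  have hmeas {u : ℝ} (hu : u ≤ T) : Measurable[ℱ u] (runMax M u) :=
    measurable_runMax ℱ hM.stronglyAdapted.adapted (hcont hu)
  have hint {u : ℝ} (hu : 0 ≤ u) (huT : u ≤ T) : Integrable (runMax M u) μ :=
    integrable_runMax hMcont hMint ((hmeas huT).mono (ℱ.le u) le_rfl) hu huT
  set A := fun ω => max (runMax M t ω - Pbar) 0
  set B := fun ω => max (runMax M s ω - max Pbar (runMax M t ω)) 0
  have hA : StronglyMeasurable[ℱ t] A :=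
    (((hmeas htT).sub_const _).max measurable_const).stronglyMeasurable
  have hAi : Integrable A μ := ((hint ht htT).sub (integrable_const Pbar)).pos_part
  have hBi : Integrable B μ :=
    ((hint (ht.trans hts) hsT).sub ((integrable_const Pbar).sup (hint ht htT))).pos_part
  have hsplit : (fun ω => cappedPrice Pbar M s ω) = M s - A - B := funext fun ω => by
    have hmono := runMax_mono (isCompact_Icc.bddAbove_image (hcont hsT ω)) ht hts
    rw [cappedPrice, max_sub_zero_eq_add_of_le (c := Pbar) hmono]
    simp only [Pi.sub_apply, A, B]
    ring
  rw [hsplit]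
  filter_upwards [condExp_sub ((hM.integrable s).sub hAi) hBi (ℱ t),
    condExp_sub (hM.integrable s) hAi (ℱ t), hM.condExp_ae_eq hts] with ω h1 h2 h3
  rw [h1, Pi.sub_apply, h2, Pi.sub_apply, h3, condExp_of_stronglyMeasurable (ℱ.le t) hA hAi]
  rfl

/-- for a continuous martingale `M` with `E[sup_{t≤T}|M_t|] < ∞` and the
capped price `P_t = M_t − (M*_t − P̄)⁺`, for all `0 ≤ t ≤ s ≤ T`, almost surely
`E[P_s | F_t] = P_t − E[(M*_s − max(P̄, M*_t))⁺ | F_t]`. -/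
theorem cappedPrice_condexp
    {Ω : Type*} {m0 : MeasurableSpace Ω} {μ : Measure Ω} [IsProbabilityMeasure μ]
    (ℱ : MeasureTheory.Filtration ℝ m0) (T Pbar : ℝ) (hT : 0 < T)
    (M : ℝ → Ω → ℝ) (hM : Martingale M ℱ μ)
    (hMcont : ∀ ω, ContinuousOn (fun t => M t ω) (Set.Icc 0 T))
    (hMint : Integrable (fun ω => sSup ((fun t => |M t ω|) '' Set.Icc 0 T)) μ)
    (t s : ℝ) (ht : 0 ≤ t) (hts : t ≤ s) (hsT : s ≤ T) :
    μ[fun ω => cappedPrice Pbar M s ω | ℱ t]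
      =ᵐ[μ] fun ω => cappedPrice Pbar M t ω
        - (μ[fun ω' => max (runMax M s ω' - max Pbar (runMax M t ω')) 0 | ℱ t]) ω :=
  cappedPrice_condexp_general ℱ T Pbar M hM hMcont hMint t s ht hts hsT

end
end

section
/- Let Z be standard normally distributed (law gaussianReal 0 1 on ℝ), and let σ > 0, r > 0, K ≥ 0. Then E[(σ√r |Z| − K)⁺] = 2σ√r φ(K/(σ√r)) − 2K (1 − Φ(K/(σ√r))). -/
open MeasureTheory ProbabilityTheory

noncomputable section

/-- The standard normal density `φ(x) = exp(−x²/2)/√(2π)`. -/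
def stdNormalPdf (x : ℝ) : ℝ := Real.exp (-x ^ 2 / 2) / Real.sqrt (2 * Real.pi)

/-- The standard normal cumulative distribution function `Φ(x) = ∫_{−∞}^x φ(y) dy`. -/
def stdNormalCdf (x : ℝ) : ℝ := ∫ y in Set.Iic x, stdNormalPdf y

/-! With `c = σ√r`, the integrand is even in `z` and vanishes for `|z| ≤ K/c`,
so the expectation is `2 ∫_{K/c}^∞ φ(x) (c x − K) dx`. Since `φ' = −x φ`,
the first term integrates to `c φ(K/c)` and the second to `K (1 − Φ(K/c))`. -/

open Set Filter Topology

lemma stdNormalPdf_eq_gaussianPDFReal : stdNormalPdf = gaussianPDFReal 0 1 := by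
  funext x
  simp [stdNormalPdf, gaussianPDFReal, mul_comm, div_eq_inv_mul]

lemma integrable_stdNormalPdf : Integrable stdNormalPdf :=
  stdNormalPdf_eq_gaussianPDFReal ▸ integrable_gaussianPDFReal 0 1

lemma integral_stdNormalPdf : ∫ x, stdNormalPdf x = 1 :=
  stdNormalPdf_eq_gaussianPDFReal ▸ integral_gaussianPDFReal_eq_one 0 one_ne_zero

lemma stdNormalPdf_abs (x : ℝ) : stdNormalPdf |x| = stdNormalPdf x := by
  simp only [stdNormalPdf, sq_abs]

lemma integrable_mul_stdNormalPdf : Integrable fun x ↦ x * stdNormalPdf x := by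
  refine ((integrable_mul_exp_neg_mul_sq (b := 1 / 2) (by norm_num)).div_const
    (Real.sqrt (2 * Real.pi))).congr (Eventually.of_forall fun x ↦ ?_)
  simp only [stdNormalPdf]
  ring_nf

lemma hasDerivAt_stdNormalPdf (x : ℝ) :
    HasDerivAt stdNormalPdf (-x * stdNormalPdf x) x := by
  have h : HasDerivAt (fun y : ℝ ↦ -y ^ 2 / 2) (-x) x :=
    ((hasDerivAt_pow 2 x).neg.div_const 2).congr_deriv (by push_cast; ring)
  exact (h.exp.div_const (Real.sqrt (2 * Real.pi))).congr_deriv (by simp only [stdNormalPdf]; ring)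

lemma tendsto_stdNormalPdf_atTop : Tendsto stdNormalPdf atTop (𝓝 0) := by
  have h : Tendsto (fun x : ℝ ↦ -x ^ 2 / 2) atTop atBot :=
    (tendsto_neg_atBot_iff.mpr (tendsto_pow_atTop two_ne_zero)).atBot_div_const two_pos
  have h' := (Real.tendsto_exp_atBot.comp h).div_const (Real.sqrt (2 * Real.pi))
  rwa [zero_div] at h'

lemma integral_Ioi_mul_stdNormalPdf (b : ℝ) :
    ∫ x in Ioi b, x * stdNormalPdf x = stdNormalPdf b := by
  have h := integral_Ioi_of_hasDerivAt_of_tendsto' (f := -stdNormalPdf) (a := b) (m := 0)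
    (fun x _ ↦ by simpa using (hasDerivAt_stdNormalPdf x).neg)
    integrable_mul_stdNormalPdf.integrableOn
    (by rw [← neg_zero]; exact tendsto_stdNormalPdf_atTop.neg)
  simpa using h

lemma integral_Ioi_stdNormalPdf (b : ℝ) :
    ∫ x in Ioi b, stdNormalPdf x = 1 - stdNormalCdf b := by
  rw [stdNormalCdf, ← integral_stdNormalPdf, ← intervalIntegral.integral_Iic_add_Ioi
    integrable_stdNormalPdf.integrableOn integrable_stdNormalPdf.integrableOn, add_sub_cancel_left]

lemma integral_Ioi_stdNormalPdf_mul_sub (b c K : ℝ) :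
    ∫ x in Ioi b, stdNormalPdf x * (c * x - K)
      = c * stdNormalPdf b - K * (1 - stdNormalCdf b) := by
  have h (x : ℝ) :
      stdNormalPdf x * (c * x - K) = c * (x * stdNormalPdf x) - K * stdNormalPdf x := by
    ring
  simp_rw [h]
  rw [integral_sub (integrable_mul_stdNormalPdf.const_mul c).integrableOn
      (integrable_stdNormalPdf.const_mul K).integrableOn,
    integral_const_mul, integral_const_mul, integral_Ioi_mul_stdNormalPdf,
    integral_Ioi_stdNormalPdf]

lemma max_mul_sub_zero_eq_indicator {c : ℝ} (hc : 0 < c) (K x : ℝ) :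
    max (c * x - K) 0 = (Ioi (K / c)).indicator (fun x ↦ c * x - K) x := by
  by_cases hx : x ∈ Ioi (K / c)
  · rw [indicator_of_mem hx, max_eq_left]
    rw [mem_Ioi, div_lt_iff₀ hc] at hx
    linarith
  · rw [indicator_of_notMem hx, max_eq_right]
    rw [mem_Ioi, not_lt, le_div_iff₀ hc] at hx
    linarith

lemma integral_stdNormalPdf_mul_max_mul_abs_sub {c K : ℝ} (hc : 0 < c) (hK : 0 ≤ K) :
    ∫ z, stdNormalPdf z * max (c * |z| - K) 0
      = 2 * (c * stdNormalPdf (K / c) - K * (1 - stdNormalCdf (K / c))) := by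
  have heven := integral_comp_abs (f := fun x ↦ stdNormalPdf x * max (c * x - K) 0)
  simp only [stdNormalPdf_abs] at heven
  simp_rw [heven, max_mul_sub_zero_eq_indicator hc, ← indicator_mul_right]
  rw [setIntegral_indicator measurableSet_Ioi, Ioi_inter_Ioi, max_eq_right (div_nonneg hK hc.le),
    integral_Ioi_stdNormalPdf_mul_sub]

/-- for `Z` standard normal, `σ > 0`, `r > 0`, `K ≥ 0`,
`E[(σ√r |Z| − K)⁺] = 2σ√r φ(K/(σ√r)) − 2K (1 − Φ(K/(σ√r)))`
(the value of a fixed-strike lookback call in the Bachelier model). -/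
theorem bachelier_lookback_value (σ r K : ℝ) (hσ : 0 < σ) (hr : 0 < r) (hK : 0 ≤ K) :
    ∫ z, max (σ * Real.sqrt r * |z| - K) 0 ∂(gaussianReal 0 1)
      = 2 * σ * Real.sqrt r * stdNormalPdf (K / (σ * Real.sqrt r))
        - 2 * K * (1 - stdNormalCdf (K / (σ * Real.sqrt r))) := by
  rw [integral_gaussianReal_eq_integral_smul one_ne_zero, ← stdNormalPdf_eq_gaussianPDFReal]
  simp only [smul_eq_mul]
  rw [integral_stdNormalPdf_mul_max_mul_abs_sub (mul_pos hσ (Real.sqrt_pos.mpr hr)) hK]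
  ring

end
end

section
/- Fix 0 ≤ t < T, λ > 0, σ > 0, P̄ ∈ ℝ and p ∈ ℝ. Then the Bachelier barrier-induced trading rate with G = G_β converges in the low-inventory-cost limit: lim_{β → 0⁺} (1/(2λ)) ∫_t^T (σ/√(s−t)) (G_β(T−s)/G_β(T−t)) φ((P̄−p)/(σ√(s−t))) ds = (1/(2λ)) ∫_t^T (σ/√(s−t)) φ((P̄−p)/(σ√(s−t))) ds. -/
/-!
For `β > 0` the function `G_β` is positive and increasing on `[0, ∞)`, so for `t < s ≤ T` the
ratio `G_β(T−s)/G_β(T−t)` lies in `[0, 1]`; after cancelling the common factor `β` it is a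
ratio of functions continuous in `β` with value `1` at `β = 0`. The integrand is therefore
dominated by `|σ| / (√(2π) √(s−t))`, which is integrable, and dominated convergence gives the limit.
-/

open MeasureTheory intervalIntegral Filter

noncomputable section

/-- `G_β(s) = β cosh(β s) + β² sinh(β s)` (the case `γ = Γ`, `β = √(γ/λ)`). -/
def Gbeta (β s : ℝ) : ℝ := β * Real.cosh (β * s) + β ^ 2 * Real.sinh (β * s)

open Set Topology
open scoped Interval

/-- For `x < 0` both sides vanish: `√x = 0`, and `x ^ (-1/2)` carries the factor
`cos (-π/2) = 0`. -/
theorem Real.inv_sqrt_eq_rpow (x : ℝ) : (√x)⁻¹ = x ^ (-(1 / 2) : ℝ) := by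
  rcases le_or_gt 0 x with hx | hx
  · rw [Real.sqrt_eq_rpow, Real.rpow_neg hx]
  · rw [Real.sqrt_eq_zero'.mpr hx.le, inv_zero, Real.rpow_def_of_neg hx]
    simp [inv_mul_eq_div]

theorem intervalIntegrable_inv_sqrt_sub (t a b : ℝ) :
    IntervalIntegrable (fun s => (√(s - t))⁻¹) volume a b := by
  simp_rw [Real.inv_sqrt_eq_rpow]
  simpa using (intervalIntegral.intervalIntegrable_rpow' (a := a - t) (b := b - t)
    (r := -(1 / 2)) (by norm_num)).comp_sub_right t

theorem tendsto_intervalIntegral_mul_of_tendsto_one {ι : Type*} {l : Filter ι}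
    [l.IsCountablyGenerated] {μ : Measure ℝ} {a b : ℝ} {f : ℝ → ℝ} {r : ι → ℝ → ℝ}
    (hf : IntervalIntegrable f μ a b)
    (hr_meas : ∀ᶠ i in l, AEStronglyMeasurable (r i) (μ.restrict (Ι a b)))
    (hr_le : ∀ᶠ i in l, ∀ s ∈ Ι a b, |r i s| ≤ 1)
    (hr_lim : ∀ s ∈ Ι a b, Tendsto (fun i => r i s) l (𝓝 1)) :
    Tendsto (fun i => ∫ s in a..b, f s * r i s ∂μ) l (𝓝 (∫ s in a..b, f s ∂μ)) := by
  refine tendsto_integral_filter_of_dominated_convergence (fun s => ‖f s‖)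
    (hr_meas.mono fun i hi => hf.def'.aestronglyMeasurable.mul hi) ?_ hf.norm ?_
  · filter_upwards [hr_le] with i hi
    refine ae_of_all _ fun s hs => ?_
    rw [norm_mul]
    exact mul_le_of_le_one_right (norm_nonneg _) (hi s hs)
  · refine ae_of_all _ fun s hs => ?_
    simpa using (hr_lim s hs).const_mul (f s)

theorem continuous_stdNormalPdf : Continuous stdNormalPdf := by
  unfold stdNormalPdf
  fun_prop

theorem stdNormalPdf_nonneg (x : ℝ) : 0 ≤ stdNormalPdf x := by
  unfold stdNormalPdf
  positivity

theorem stdNormalPdf_le (x : ℝ) : stdNormalPdf x ≤ (√(2 * Real.pi))⁻¹ := by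
  rw [stdNormalPdf, div_eq_mul_inv]
  have hexp : Real.exp (-x ^ 2 / 2) ≤ 1 := Real.exp_le_one_iff.mpr (by nlinarith [sq_nonneg x])
  exact mul_le_of_le_one_left (by positivity) hexp

theorem continuous_Gbeta (β : ℝ) : Continuous (Gbeta β) := by
  unfold Gbeta
  fun_prop

theorem Gbeta_eq_mul (β s : ℝ) :
    Gbeta β s = β * (Real.cosh (β * s) + β * Real.sinh (β * s)) := by
  rw [Gbeta]
  ring

theorem Gbeta_pos {β s : ℝ} (hβ : 0 < β) (hs : 0 ≤ s) : 0 < Gbeta β s := by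
  have hsinh : 0 ≤ Real.sinh (β * s) := Real.sinh_nonneg_iff.mpr (mul_nonneg hβ.le hs)
  rw [Gbeta_eq_mul]
  exact mul_pos hβ (add_pos_of_pos_of_nonneg (Real.cosh_pos _) (mul_nonneg hβ.le hsinh))

theorem Gbeta_le_Gbeta {β a b : ℝ} (hβ : 0 ≤ β) (ha : 0 ≤ a) (hab : a ≤ b) :
    Gbeta β a ≤ Gbeta β b := by
  have hβab : β * a ≤ β * b := mul_le_mul_of_nonneg_left hab hβ
  have hcosh : Real.cosh (β * a) ≤ Real.cosh (β * b) :=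
    Real.cosh_strictMonoOn.monotoneOn (mul_nonneg hβ ha) (mul_nonneg hβ (ha.trans hab)) hβab
  have hsinh : Real.sinh (β * a) ≤ Real.sinh (β * b) := Real.sinh_le_sinh.mpr hβab
  unfold Gbeta
  gcongr

theorem abs_Gbeta_div_Gbeta_le_one {β a b : ℝ} (hβ : 0 < β) (ha : 0 ≤ a) (hab : a ≤ b) :
    |Gbeta β a / Gbeta β b| ≤ 1 := by
  rw [abs_of_nonneg (div_nonneg (Gbeta_pos hβ ha).le (Gbeta_pos hβ (ha.trans hab)).le)]
  exact div_le_one_of_le₀ (Gbeta_le_Gbeta hβ.le ha hab) (Gbeta_pos hβ (ha.trans hab)).le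

theorem tendsto_Gbeta_div_Gbeta (a b : ℝ) :
    Tendsto (fun β => Gbeta β a / Gbeta β b) (𝓝[>] 0) (𝓝 1) := by
  set H : ℝ → ℝ → ℝ := fun β s => Real.cosh (β * s) + β * Real.sinh (β * s)
  have hH : ∀ β ∈ Ioi (0 : ℝ), H β a / H β b = Gbeta β a / Gbeta β b := fun β hβ => by
    simp only [H, Gbeta_eq_mul]
    rw [mul_div_mul_left _ _ (ne_of_gt hβ)]
  have hcont : ContinuousAt (fun β => H β a / H β b) 0 :=
    ContinuousAt.div (by fun_prop) (by fun_prop) (by simp [H])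
  have hlim : Tendsto (fun β => H β a / H β b) (𝓝[>] 0) (𝓝 1) := by
    simpa [H] using hcont.tendsto.mono_left nhdsWithin_le_nhds
  exact hlim.congr' (eventually_mem_nhdsWithin.mono hH)

theorem intervalIntegrable_div_sqrt_mul_stdNormalPdf (σ x t a b : ℝ) :
    IntervalIntegrable (fun s => σ / √(s - t) * stdNormalPdf (x / (σ * √(s - t)))) volume a b := by
  have hφ := continuous_stdNormalPdf.measurable
  refine ((intervalIntegrable_inv_sqrt_sub t a b).const_mul (|σ| * (√(2 * Real.pi))⁻¹)).mono_fun'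
    (by fun_prop : Measurable _).aestronglyMeasurable (ae_of_all _ fun s => ?_)
  dsimp only
  rw [norm_mul, Real.norm_eq_abs, Real.norm_eq_abs, abs_div, abs_of_nonneg (Real.sqrt_nonneg _),
    abs_of_nonneg (stdNormalPdf_nonneg _)]
  calc |σ| / √(s - t) * stdNormalPdf (x / (σ * √(s - t)))
      ≤ |σ| / √(s - t) * (√(2 * Real.pi))⁻¹ :=
        mul_le_mul_of_nonneg_left (stdNormalPdf_le _) (by positivity)
    _ = |σ| * (√(2 * Real.pi))⁻¹ * (√(s - t))⁻¹ := by ring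

theorem uBA_low_cost_limit_general
    (T lam σ Pbar p t : ℝ) (htT : t < T) :
    Tendsto
      (fun β : ℝ => (1 / (2 * lam)) * ∫ s in t..T,
        (σ / Real.sqrt (s - t)) * (Gbeta β (T - s) / Gbeta β (T - t))
          * stdNormalPdf ((Pbar - p) / (σ * Real.sqrt (s - t))))
      (nhdsWithin 0 (Set.Ioi 0))
      (nhds ((1 / (2 * lam)) * ∫ s in t..T,
        (σ / Real.sqrt (s - t)) * stdNormalPdf ((Pbar - p) / (σ * Real.sqrt (s - t))))) := by
  refine Tendsto.const_mul _ ?_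
  have hratio_meas : ∀ β, AEStronglyMeasurable (fun s => Gbeta β (T - s) / Gbeta β (T - t))
      (volume.restrict (Ι t T)) := fun β =>
    (((continuous_Gbeta β).comp (continuous_sub_left T)).div_const _).aestronglyMeasurable
  have hratio_le : ∀ᶠ β in 𝓝[>] 0, ∀ s ∈ Ι t T, |Gbeta β (T - s) / Gbeta β (T - t)| ≤ 1 := by
    filter_upwards [self_mem_nhdsWithin] with β hβ s hs
    rw [uIoc_of_le htT.le] at hs
    exact abs_Gbeta_div_Gbeta_le_one hβ (by linarith [hs.2]) (by linarith [hs.1])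
  simpa only [mul_right_comm] using
    tendsto_intervalIntegral_mul_of_tendsto_one
      (intervalIntegrable_div_sqrt_mul_stdNormalPdf σ (Pbar - p) t t T)
      (Eventually.of_forall hratio_meas) hratio_le fun s _ => tendsto_Gbeta_div_Gbeta _ _

/-- the Bachelier barrier-induced trading rate converges in the
low-inventory-cost limit `β → 0⁺` to
`(1/(2λ)) ∫_t^T (σ/√(s−t)) φ((P̄−p)/(σ√(s−t))) ds`. -/
theorem uBA_low_cost_limit
    (T lam σ Pbar p t : ℝ) (ht : 0 ≤ t) (htT : t < T) (hlam : 0 < lam) (hσ : 0 < σ) :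
    Tendsto
      (fun β : ℝ => (1 / (2 * lam)) * ∫ s in t..T,
        (σ / Real.sqrt (s - t)) * (Gbeta β (T - s) / Gbeta β (T - t))
          * stdNormalPdf ((Pbar - p) / (σ * Real.sqrt (s - t))))
      (nhdsWithin 0 (Set.Ioi 0))
      (nhds ((1 / (2 * lam)) * ∫ s in t..T,
        (σ / Real.sqrt (s - t)) * stdNormalPdf ((Pbar - p) / (σ * Real.sqrt (s - t))))) :=
  uBA_low_cost_limit_general T lam σ Pbar p t htT

end
end
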